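/- arXiv:1410.3120 — 2 statements merged into one kernel-verified Lean document; each statement's English description precedes it below -/
import Mathlib

section
/- The function F(z) = min(z, 1) on ℝ₊ satisfies F(z)/F(1/z) = z for all z > 0, and every function G : ℝ₊ → [0,1] satisfying G(z)/G(1/z) = z pointwise satisfies G(z) ≤ min(z,1) for all z > 0. -/
-- `a / 0 = 0`, so a nonzero quotient forces a nonzero denominator.
theorem eq_mul_of_div_eq_of_ne_zero {G₀ : Type*} [GroupWithZero G₀] {a b z : G₀}
    (h : a / b = z) (hz : z ≠ 0) : a = z * b := by
  have hb : b ≠ 0 := by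
    rintro rfl
    exact hz (by rw [← h, div_zero])
  rw [← h, div_mul_cancel₀ a hb]

theorem min_div_min_one_div_eq_self {K : Type*} [Field K] [LinearOrder K] [IsStrictOrderedRing K]
    {z : K} (hz : 0 < z) : min z 1 / min (1 / z) 1 = z := by
  rcases le_or_gt z 1 with hle | hgt
  · rw [min_eq_left hle, min_eq_right (one_le_one_div hz hle), div_one]
  · rw [min_eq_right hgt.le, min_eq_left (div_le_one_of_le₀ hgt.le hz.le), one_div_one_div]

theorem metropolis_function_maximal :
    (∀ z : ℝ, 0 < z → min z 1 / min (1 / z) 1 = z) ∧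
    (∀ G : ℝ → ℝ, (∀ z : ℝ, 0 < z → G z ∈ Set.Icc (0 : ℝ) 1) →
      (∀ z : ℝ, 0 < z → G z / G (1 / z) = z) →
      ∀ z : ℝ, 0 < z → G z ≤ min z 1) := by
  refine ⟨fun z hz => min_div_min_one_div_eq_self hz, fun G hG hsym z hz => ?_⟩
  have hG_inv_le_one : G (1 / z) ≤ 1 := (hG (1 / z) (one_div_pos.mpr hz)).2
  refine le_min ?_ (hG z hz).2
  calc G z = z * G (1 / z) := eq_mul_of_div_eq_of_ne_zero (hsym z hz) hz.ne'
    _ ≤ z * 1 := mul_le_mul_of_nonneg_left hG_inv_le_one hz.le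
    _ = z := mul_one z
end

section
/- Let A be an n×n skew-symmetric matrix with entries bounded by 1 in absolute value, 0 < ε ≤ 1, and let (p(t)) be the Grigoriadis–Khachiyan random process: with Φ(t) = ∑ᵢ exp(ε Uᵢ(t)/2) where U(t+1) = U(t) + A e_{k(t)} and k(t) is sampled with probability p_i(t) = exp(ε Uᵢ(t)/2)/Φ(t), U(0) = 0. Then E[Φ(t+1) | P(t)] ≤ Φ(t)(1 + ε²/6), and hence E[Φ(t)] ≤ n (1 + ε²/6)^t ≤ n exp(tε²/6). -/
/-- `gkU A t f` is the vector `U(t) = A X(t)` of the Grigoriadis–Khachiyan process,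
where `f : Fin t → Fin n` is the history of sampled indices: `U(0) = 0`,
`U(t+1) = U(t) + A e_{k(t)}`. -/
noncomputable def gkU {n : ℕ} (A : Matrix (Fin n) (Fin n) ℝ) :
    ∀ t : ℕ, (Fin t → Fin n) → Fin n → ℝ
  | 0, _, _ => 0
  | (t + 1), f, i => gkU A t (Fin.init f) i + A i (f (Fin.last t))

/-- The exponential potential `Φ(t) = ∑ᵢ exp(ε Uᵢ(t)/2)`. -/
noncomputable def gkPhi {n : ℕ} (A : Matrix (Fin n) (Fin n) ℝ) (ε : ℝ)
    (t : ℕ) (f : Fin t → Fin n) : ℝ :=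
  ∑ i, Real.exp (ε * gkU A t f i / 2)

/-- The sampling probabilities `pᵢ(t) = exp(ε Uᵢ(t)/2)/Φ(t)`. -/
noncomputable def gkP {n : ℕ} (A : Matrix (Fin n) (Fin n) ℝ) (ε : ℝ)
    (t : ℕ) (f : Fin t → Fin n) (i : Fin n) : ℝ :=
  Real.exp (ε * gkU A t f i / 2) / gkPhi A ε t f

/-- The probability of observing the history `f` of sampled indices. -/
noncomputable def gkProb {n : ℕ} (A : Matrix (Fin n) (Fin n) ℝ) (ε : ℝ) :
    ∀ t : ℕ, (Fin t → Fin n) → ℝ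
  | 0, _ => 1
  | (t + 1), f => gkProb A ε t (Fin.init f) * gkP A ε t (Fin.init f) (f (Fin.last t))

/-!
Write `wᵢ = exp (ε Uᵢ / 2)`, so that `Φ = ∑ᵢ wᵢ` and sampling `k` turns the potential into
`∑ᵢ wᵢ exp (ε aᵢₖ / 2)`. Since `|ε aᵢₖ / 2| ≤ 1 / 2`, each exponential is at most
`1 + ε aᵢₖ / 2 + ε² / 6`, so the conditional expectation of the next potential is at most
`Φ (1 + ε² / 6) + ε / (2 Φ) · ⟨w, A w⟩`, and the quadratic form of a skew-symmetric matrix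
vanishes. Averaging this over the histories of length `t` and starting from `Φ(0) = n` gives the
bound on `E[Φ(t)]`.
-/

open Matrix Finset Real

theorem Real.exp_le_one_add_add_two_thirds_mul_sq {x : ℝ} (hx : |x| ≤ 1 / 2) :
    exp x ≤ 1 + x + 2 / 3 * x ^ 2 := by
  have htaylor := abs_le.mp (exp_bound (hx.trans (by norm_num)) (n := 3) (by norm_num))
  have hcube : |x| ^ 3 ≤ x ^ 2 / 2 := by
    rw [pow_succ, ← sq_abs x]
    nlinarith [sq_nonneg |x|]
  norm_num [sum_range_succ, Nat.factorial] at htaylor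
  nlinarith

theorem Real.exp_mul_div_two_le {ε a : ℝ} (hε : |ε| ≤ 1) (ha : |a| ≤ 1) :
    exp (ε * a / 2) ≤ 1 + ε * a / 2 + ε ^ 2 / 6 := by
  have hεa : |ε * a| ≤ 1 := by
    rw [abs_mul]; nlinarith [abs_nonneg ε, abs_nonneg a]
  have hsq : (ε * a) ^ 2 ≤ ε ^ 2 := by
    rw [mul_pow]; nlinarith [sq_nonneg ε, sq_le_one_iff_abs_le_one a |>.mpr ha]
  calc exp (ε * a / 2) ≤ 1 + ε * a / 2 + 2 / 3 * (ε * a / 2) ^ 2 :=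
        exp_le_one_add_add_two_thirds_mul_sq (by rw [abs_div, abs_two]; linarith)
    _ ≤ 1 + ε * a / 2 + ε ^ 2 / 6 := by nlinarith

theorem Real.one_add_pow_le_exp_mul {x : ℝ} (hx : 0 ≤ 1 + x) (t : ℕ) :
    (1 + x) ^ t ≤ exp (t * x) := by
  rw [exp_nat_mul]
  exact pow_le_pow_left₀ hx (by linarith [add_one_le_exp x]) t

theorem Matrix.dotProduct_mulVec_self_eq_zero_of_transpose_eq_neg {ι R : Type*} [Fintype ι]
    [CommRing R] [IsAddTorsionFree R] {A : Matrix ι ι R} (hskew : Aᵀ = -A) (v : ι → R) :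
    v ⬝ᵥ (A *ᵥ v) = 0 := by
  refine self_eq_neg.mp ?_
  conv_lhs => rw [dotProduct_mulVec, ← mulVec_transpose, hskew, dotProduct_comm]
  simp only [neg_mulVec, dotProduct_neg]

theorem Fin.sum_fun_succ_eq_sum_sum_snoc {α M : Type*} [Fintype α] [AddCommMonoid M] {t : ℕ}
    (g : (Fin (t + 1) → α) → M) :
    ∑ f, g f = ∑ f : Fin t → α, ∑ k, g (Fin.snoc f k) :=
  ((Fin.snocEquiv fun _ ↦ α).sum_comp g).symm.trans (Fintype.sum_prod_type_right _)

theorem sum_mul_sum_mul_exp_le {ι : Type*} [Fintype ι] {A : Matrix ι ι ℝ} (hskew : Aᵀ = -A)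
    (hbdd : ∀ i k, |A i k| ≤ 1) {ε : ℝ} (hε : |ε| ≤ 1) {w : ι → ℝ} (hw : 0 ≤ w) :
    ∑ k, w k * ∑ i, w i * exp (ε * A i k / 2) ≤ (∑ i, w i) ^ 2 * (1 + ε ^ 2 / 6) := by
  have hquad : ∑ k, w k * ∑ i, w i * A i k = 0 := by
    rw [← dotProduct_mulVec_self_eq_zero_of_transpose_eq_neg hskew w, dotProduct_mulVec,
      dotProduct_comm]
    rfl
  calc ∑ k, w k * ∑ i, w i * exp (ε * A i k / 2)
      ≤ ∑ k, w k * ∑ i, w i * (1 + ε * A i k / 2 + ε ^ 2 / 6) := by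
        gcongr with k _ i _
        exacts [hw k, hw i, exp_mul_div_two_le hε (hbdd i k)]
    _ = (∑ i, w i) ^ 2 * (1 + ε ^ 2 / 6) + ε / 2 * ∑ k, w k * ∑ i, w i * A i k := by
        simp only [mul_add, sum_add_distrib, ← sum_mul, mul_sum]
        rw [add_right_comm]
        congr 1
        · ring
        · exact sum_congr rfl fun _ _ ↦ sum_congr rfl fun _ _ ↦ by ring
    _ = (∑ i, w i) ^ 2 * (1 + ε ^ 2 / 6) := by rw [hquad, mul_zero, add_zero]

section GrigoriadisKhachiyan

variable {n : ℕ} (A : Matrix (Fin n) (Fin n) ℝ) (ε : ℝ) {t : ℕ}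

theorem gkU_snoc (f : Fin t → Fin n) (k i : Fin n) :
    gkU A (t + 1) (Fin.snoc f k) i = gkU A t f i + A i k := by
  simp [gkU]

theorem gkPhi_zero (f : Fin 0 → Fin n) : gkPhi A ε 0 f = n := by
  simp [gkPhi, gkU]

theorem gkPhi_snoc (f : Fin t → Fin n) (k : Fin n) :
    gkPhi A ε (t + 1) (Fin.snoc f k) =
      ∑ i, exp (ε * gkU A t f i / 2) * exp (ε * A i k / 2) := by
  simp only [gkPhi, gkU_snoc, ← exp_add, mul_add, add_div]

theorem gkProb_nonneg : ∀ {t : ℕ} (f : Fin t → Fin n), 0 ≤ gkProb A ε t f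
  | 0, _ => zero_le_one
  | _ + 1, _ => mul_nonneg (gkProb_nonneg _) <|
      div_nonneg (exp_pos _).le (sum_nonneg fun _ _ ↦ (exp_pos _).le)

variable {A ε}

theorem sum_gkP_mul_gkPhi_snoc_le (hskew : Aᵀ = -A) (hbdd : ∀ i k, |A i k| ≤ 1) (hε : |ε| ≤ 1)
    (f : Fin t → Fin n) :
    ∑ k, gkP A ε t f k * gkPhi A ε (t + 1) (Fin.snoc f k) ≤ gkPhi A ε t f * (1 + ε ^ 2 / 6) := by
  set Φ := gkPhi A ε t f
  calc ∑ k, gkP A ε t f k * gkPhi A ε (t + 1) (Fin.snoc f k)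
      = Φ⁻¹ * ∑ k, exp (ε * gkU A t f k / 2) *
          ∑ i, exp (ε * gkU A t f i / 2) * exp (ε * A i k / 2) := by
        simp only [gkP, gkPhi_snoc, div_eq_inv_mul, mul_sum, mul_assoc, Φ]
    _ ≤ Φ⁻¹ * (Φ ^ 2 * (1 + ε ^ 2 / 6)) := by
        gcongr
        · exact inv_nonneg.mpr (sum_nonneg fun _ _ ↦ (exp_pos _).le)
        · exact sum_mul_sum_mul_exp_le hskew hbdd hε fun _ ↦ (exp_pos _).le
    _ = Φ * (1 + ε ^ 2 / 6) := by
        rw [sq, ← mul_assoc, ← mul_assoc, inv_mul_mul_self]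

theorem sum_gkProb_mul_gkPhi_succ_le (hskew : Aᵀ = -A) (hbdd : ∀ i k, |A i k| ≤ 1)
    (hε : |ε| ≤ 1) (t : ℕ) :
    ∑ f, gkProb A ε (t + 1) f * gkPhi A ε (t + 1) f ≤
      (∑ f, gkProb A ε t f * gkPhi A ε t f) * (1 + ε ^ 2 / 6) := by
  calc ∑ f, gkProb A ε (t + 1) f * gkPhi A ε (t + 1) f
      = ∑ f, gkProb A ε t f * ∑ k, gkP A ε t f k * gkPhi A ε (t + 1) (Fin.snoc f k) := by
        simp only [Fin.sum_fun_succ_eq_sum_sum_snoc, gkProb, Fin.init_snoc, Fin.snoc_last,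
          mul_sum, mul_assoc]
    _ ≤ ∑ f, gkProb A ε t f * (gkPhi A ε t f * (1 + ε ^ 2 / 6)) := by
        gcongr with f
        exacts [gkProb_nonneg A ε f, sum_gkP_mul_gkPhi_snoc_le hskew hbdd hε f]
    _ = (∑ f, gkProb A ε t f * gkPhi A ε t f) * (1 + ε ^ 2 / 6) := by
        simp only [sum_mul, mul_assoc]

theorem sum_gkProb_mul_gkPhi_le (hskew : Aᵀ = -A) (hbdd : ∀ i k, |A i k| ≤ 1) (hε : |ε| ≤ 1) :
    ∀ t : ℕ, ∑ f, gkProb A ε t f * gkPhi A ε t f ≤ n * (1 + ε ^ 2 / 6) ^ t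
  | 0 => by simp [gkProb, gkPhi_zero]
  | t + 1 => by
    rw [pow_succ, ← mul_assoc]
    exact (sum_gkProb_mul_gkPhi_succ_le hskew hbdd hε t).trans <|
      mul_le_mul_of_nonneg_right (sum_gkProb_mul_gkPhi_le hskew hbdd hε t) (by positivity)

end GrigoriadisKhachiyan

theorem gk_potential_bound (n : ℕ) (A : Matrix (Fin n) (Fin n) ℝ) (ε : ℝ)
    (hskew : A.transpose = -A) (hbdd : ∀ i k, |A i k| ≤ 1)
    (hε0 : 0 < ε) (hε1 : ε ≤ 1) :
    (∀ (t : ℕ) (f : Fin t → Fin n),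
      ∑ k, gkP A ε t f k * gkPhi A ε (t + 1) (Fin.snoc f k) ≤
        gkPhi A ε t f * (1 + ε ^ 2 / 6)) ∧
    (∀ t : ℕ,
      (∑ f : Fin t → Fin n, gkProb A ε t f * gkPhi A ε t f) ≤
          n * (1 + ε ^ 2 / 6) ^ t ∧
      (n : ℝ) * (1 + ε ^ 2 / 6) ^ t ≤ n * Real.exp (t * ε ^ 2 / 6)) := by
  have hε : |ε| ≤ 1 := abs_le.mpr ⟨by linarith, hε1⟩
  refine ⟨fun t f ↦ sum_gkP_mul_gkPhi_snoc_le hskew hbdd hε f, fun t ↦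
    ⟨sum_gkProb_mul_gkPhi_le hskew hbdd hε t, ?_⟩⟩
  rw [mul_div_assoc]
  exact mul_le_mul_of_nonneg_left (one_add_pow_le_exp_mul (by positivity) t) n.cast_nonneg
end
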